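/- For indices i, j with j ≤ i, the real function f(t) = ℓ(μ, B(t)), where B(t) is B with its (i,j)-entry replaced by t, is differentiable at t = B_{ij} and its derivative equals 𝟙_{i=j}/B_{ii} − z_i·r_j, where 𝟙_{i=j} is 1 if i = j and 0 otherwise, z_i = (B·(y−μ))_i, and r_j = y_j − μ_j. -/

import Mathlib

open Matrix

/-- Multivariate Gaussian log-likelihood in the Cholesky precision parametrization
`Ω = Bᵀ B`: `ℓ(μ, B) = -(D/2)·log(2π) + log(det B) - (1/2)·‖B(y-μ)‖²`. -/
noncomputable def gaussCholLL (D : ℕ) (y μ : Fin D → ℝ)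
    (B : Matrix (Fin D) (Fin D) ℝ) : ℝ :=
  -((D : ℝ) / 2) * Real.log (2 * Real.pi) + Real.log B.det
    - (1 / 2) * ∑ k, (B.mulVec (y - μ) k) ^ 2

/-- The matrix `B` with its `(i,j)`-entry replaced by `t`. -/
def updEntry {D : ℕ} (B : Matrix (Fin D) (Fin D) ℝ) (i j : Fin D) (t : ℝ) :
    Matrix (Fin D) (Fin D) ℝ :=
  Matrix.of fun k l => if k = i ∧ l = j then t else B k l

/-!
Only one entry of `B` moves, so `t ↦ B(t)(y - μ)` is affine with slope `r_j eᵢ`, and the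
quadratic term contributes `-z_i r_j`. Since `j ≤ i`, `B(t)` stays lower triangular, so
`det B(t)` is the product of its diagonal: it does not depend on `t` if `j < i`, and it is
`t · ∏_{k ≠ i} B_kk` if `j = i`, whose logarithm has derivative `1 / B_ii`.
-/

namespace updEntry

variable {D : ℕ} {B : Matrix (Fin D) (Fin D) ℝ} {i j : Fin D}

variable (B i j) in
theorem mulVec_apply (r : Fin D → ℝ) (t : ℝ) (k : Fin D) :
    (updEntry B i j t *ᵥ r) k = (B *ᵥ r) k + if k = i then (t - B i j) * r j else 0 := by
  by_cases hk : k = i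
  · subst hk
    have hentry : ∀ l, (if l = j then t else B k l) * r l
        = B k l * r l + if l = j then (t - B k j) * r j else 0 := by
      intro l
      split_ifs with hl
      · subst hl; ring
      · ring
    simp [mulVec, dotProduct, updEntry, hentry, Finset.sum_add_distrib]
  · simp [mulVec, dotProduct, updEntry, hk]

theorem isLowerTriangular (hB : B.IsLowerTriangular) (hji : j ≤ i) (t : ℝ) :
    (updEntry B i j t).IsLowerTriangular := by
  intro k l hkl
  have hkl : k < l := hkl
  have hne : ¬(k = i ∧ l = j) := fun ⟨hki, hlj⟩ => (hkl.trans_le (hlj ▸ hki ▸ hji)).false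
  simpa [updEntry, hne] using hB hkl

theorem det_of_lt (hB : B.IsLowerTriangular) (hji : j < i) (t : ℝ) :
    (updEntry B i j t).det = B.det := by
  rw [det_of_isLowerTriangular _ (isLowerTriangular hB hji.le t), det_of_isLowerTriangular _ hB]
  refine Finset.prod_congr rfl fun k _ => ?_
  have hne : ¬(k = i ∧ k = j) := fun ⟨hki, hkj⟩ => hji.ne (hkj ▸ hki)
  simp [updEntry, hne]

theorem det_diag (hB : B.IsLowerTriangular) (t : ℝ) :
    (updEntry B i i t).det = t * ∏ k ∈ Finset.univ.erase i, B k k := by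
  rw [det_of_isLowerTriangular _ (isLowerTriangular hB le_rfl t),
    ← Finset.mul_prod_erase _ _ (Finset.mem_univ i)]
  congr 1
  · simp [updEntry]
  · refine Finset.prod_congr rfl fun k hk => ?_
    simp [updEntry, Finset.ne_of_mem_erase hk]

variable (B i j) in
theorem hasDerivAt_sum_sq_mulVec (r : Fin D → ℝ) :
    HasDerivAt (fun t => ∑ k, ((updEntry B i j t *ᵥ r) k) ^ 2)
      (2 * (B *ᵥ r) i * r j) (B i j) := by
  have hterm : ∀ k, HasDerivAt (fun t => ((updEntry B i j t *ᵥ r) k) ^ 2)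
      (if k = i then 2 * (B *ᵥ r) i * r j else 0) (B i j) := by
    intro k
    simp_rw [mulVec_apply]
    by_cases hk : k = i
    · subst hk
      have hline : HasDerivAt (fun t => (B *ᵥ r) k + (t - B k j) * r j) (r j) (B k j) := by
        simpa using
          (((hasDerivAt_id (B k j)).sub_const (B k j)).mul_const (r j)).const_add ((B *ᵥ r) k)
      simp only [if_true]
      refine (hline.fun_pow 2).congr_deriv ?_
      simp only [sub_self, zero_mul, add_zero]
      ring
    · simpa [hk] using hasDerivAt_const (B i j) (((B *ᵥ r) k) ^ 2)
  simpa using HasDerivAt.fun_sum fun k (_ : k ∈ Finset.univ) => hterm k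

theorem hasDerivAt_log_det (hB : B.IsLowerTriangular) (hdiag : ∀ k, B k k ≠ 0)
    (hji : j ≤ i) :
    HasDerivAt (fun t => Real.log (updEntry B i j t).det)
      (if i = j then (B i i)⁻¹ else 0) (B i j) := by
  rcases hji.lt_or_eq with hlt | rfl
  · simp only [det_of_lt hB hlt, if_neg hlt.ne']
    exact hasDerivAt_const _ _
  · have hP : ∏ k ∈ Finset.univ.erase j, B k k ≠ 0 :=
      Finset.prod_ne_zero_iff.mpr fun k _ => hdiag k
    simp only [det_diag hB, if_true]
    refine (((hasDerivAt_id (B j j)).mul_const _).log (mul_ne_zero (hdiag j) hP)).congr_deriv ?_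
    simp only [one_mul, id]
    field_simp

end updEntry

theorem gaussChol_deriv_B_general (D : ℕ) (y μ : Fin D → ℝ)
    (B : Matrix (Fin D) (Fin D) ℝ)
    (hLT : ∀ k l : Fin D, k < l → B k l = 0)
    (hdiag : ∀ k, 0 < B k k) (i j : Fin D) (hji : j ≤ i) :
    HasDerivAt (fun t : ℝ => gaussCholLL D y μ (updEntry B i j t))
      ((if i = j then (B i i)⁻¹ else 0) - B.mulVec (y - μ) i * (y j - μ j))
      (B i j) := by
  have hB : B.IsLowerTriangular := fun k l hkl => hLT k l hkl
  have hlogdet := updEntry.hasDerivAt_log_det hB (fun k => (hdiag k).ne') hji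
  have hquad := updEntry.hasDerivAt_sum_sq_mulVec B i j (y - μ)
  refine ((hlogdet.const_add _).fun_sub (hquad.const_mul (1 / 2))).congr_deriv ?_
  simp only [Pi.sub_apply]
  ring

/-- First partial derivative of the Gaussian log-likelihood with respect to the entry
`B_{ij}` (with `j ≤ i`): it equals `𝟙_{i=j}/B_{ii} - z_i·r_j` where `z = B(y-μ)` and
`r = y - μ`. -/
theorem gaussChol_deriv_B (D : ℕ) (hD : 1 ≤ D) (y μ : Fin D → ℝ)
    (B : Matrix (Fin D) (Fin D) ℝ)
    (hLT : ∀ k l : Fin D, k < l → B k l = 0)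
    (hdiag : ∀ k, 0 < B k k) (i j : Fin D) (hji : j ≤ i) :
    HasDerivAt (fun t : ℝ => gaussCholLL D y μ (updEntry B i j t))
      ((if i = j then (B i i)⁻¹ else 0) - B.mulVec (y - μ) i * (y j - μ j))
      (B i j) :=
  gaussChol_deriv_B_general D y μ B hLT hdiag i j hji
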